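/- Let k ≥ 2 and let 𝒯 be the linear system spanned by k linearly independent degree-d forms f_1,…,f_k in x_0,…,x_n over ℂ. Suppose 𝒯 contains at worst one strictly semistable member: that is, there is a semistable member f of 𝒯 such that every member of 𝒯 not proportional to f is stable. Then 𝒯 is stable. -/

import Mathlib

noncomputable section

open Finset MvPolynomial

/-- The pairing `⟨I,a⟩ = Σ_j I_j·a_j` of an exponent vector with a one-parameter subgroup. -/
def pairing (n : ℕ) (I : Fin (n+1) →₀ ℕ) (a : Fin (n+1) → ℤ) : ℤ :=
  ∑ j, (I j : ℤ) * a j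

/-- The affine weight `w_a(I) = Σ_{j=0}^{n-1} I_j·(a_j − a_n)` of an exponent vector. -/
def wt (n : ℕ) (a : Fin (n+1) → ℤ) (I : Fin (n+1) →₀ ℕ) : ℤ :=
  ∑ j : Fin n, (I j.castSucc : ℤ) * (a j.castSucc - a (Fin.last n))

/-- `C(a) = Σ_{j=0}^{n-1} a_j − n·a_n`. -/
def Cwt (n : ℕ) (a : Fin (n+1) → ℤ) : ℤ :=
  (∑ j : Fin n, a j.castSucc) - (n : ℤ) * a (Fin.last n)

/-- A normalized one-parameter subgroup: `a_0 ≥ a_1 ≥ … ≥ a_n` and `Σ_i a_i = 0`. -/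
def Normalized (n : ℕ) (a : Fin (n+1) → ℤ) : Prop :=
  Antitone a ∧ ∑ i, a i = 0

/-- `S` is in the Plücker support of the linear system spanned by `f`: `S` is a `k`-element
set of degree-`d` exponent vectors such that the `k×k` matrix whose `(i,I)` entry is the
coefficient of `f i` at the monomial `I ∈ S` has nonzero determinant. -/
def InPlucker (n d k : ℕ) (f : Fin k → MvPolynomial (Fin (n+1)) ℂ)
    (S : Finset (Fin (n+1) →₀ ℕ)) : Prop :=
  (∀ I ∈ S, (∑ j, I j) = d) ∧
  ∃ h : S.card = k,
    Matrix.det (Matrix.of fun i j : Fin k =>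
      MvPolynomial.coeff ((S.equivFin.symm (Fin.cast h.symm j)).1) (f i)) ≠ 0

/-- The affine weight `ω(𝒯,a)` of a linear system: the minimum over the Plücker support of
`Σ_{I∈S} w_a(I)`. -/
def omegaT (n d k : ℕ) (a : Fin (n+1) → ℤ) (f : Fin k → MvPolynomial (Fin (n+1)) ℂ) : ℤ :=
  sInf {x : ℤ | ∃ S : Finset (Fin (n+1) →₀ ℕ), InPlucker n d k f S ∧ x = ∑ I ∈ S, wt n a I}

/-- The Hilbert–Mumford weight `μ(𝒯,a)`: minus the minimum over the Plücker support of
`Σ_{I∈S} ⟨I,a⟩`. -/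
def muT (n d k : ℕ) (a : Fin (n+1) → ℤ) (f : Fin k → MvPolynomial (Fin (n+1)) ℂ) : ℤ :=
  - sInf {x : ℤ | ∃ S : Finset (Fin (n+1) →₀ ℕ), InPlucker n d k f S ∧ x = ∑ I ∈ S, pairing n I a}

/-- The affine weight `ω(g,a) = min_{I ∈ Supp(g)} w_a(I)` of a nonzero form. -/
def omegaF (n : ℕ) (a : Fin (n+1) → ℤ) (g : MvPolynomial (Fin (n+1)) ℂ) : ℤ :=
  sInf {x : ℤ | ∃ I ∈ g.support, x = wt n a I}

/-- The Hilbert–Mumford weight `μ(g,a) = −min_{I ∈ Supp(g)} ⟨I,a⟩` of a nonzero form. -/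
def muF (n : ℕ) (a : Fin (n+1) → ℤ) (g : MvPolynomial (Fin (n+1)) ℂ) : ℤ :=
  - sInf {x : ℤ | ∃ I ∈ g.support, x = pairing n I a}

/-- The affine weight `ω(h,a) = min{ a_j − a_n : h_j ≠ 0 }` of a nonzero linear form given by
its coefficient vector `h`. -/
def omegaH (n : ℕ) (a : Fin (n+1) → ℤ) (h : Fin (n+1) → ℂ) : ℤ :=
  sInf {x : ℤ | ∃ j, h j ≠ 0 ∧ x = a j - a (Fin.last n)}

/-- The Hilbert–Mumford weight `μ(h,a) = −min{ a_j : h_j ≠ 0 }` of a nonzero linear form. -/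
def muH (n : ℕ) (a : Fin (n+1) → ℤ) (h : Fin (n+1) → ℂ) : ℤ :=
  - sInf {x : ℤ | ∃ j, h j ≠ 0 ∧ x = a j}

/-- The action of `A ∈ SL(n+1,ℂ)` on forms: `(A·g)(x) = g(Ax)`. -/
def actSL (n : ℕ) (A : Matrix.SpecialLinearGroup (Fin (n+1)) ℂ)
    (g : MvPolynomial (Fin (n+1)) ℂ) : MvPolynomial (Fin (n+1)) ℂ :=
  MvPolynomial.aeval
    (fun i => ∑ j, MvPolynomial.C ((A : Matrix (Fin (n+1)) (Fin (n+1)) ℂ) i j)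
      * MvPolynomial.X j) g

/-- A nonzero degree-`d` form is semistable if `ω(A·g,a) ≤ (d/(n+1))·C(a)` for every
`A ∈ SL(n+1,ℂ)` and every nontrivial normalized one-parameter subgroup `a`. -/
def FormSemistable (n d : ℕ) (g : MvPolynomial (Fin (n+1)) ℂ) : Prop :=
  ∀ A : Matrix.SpecialLinearGroup (Fin (n+1)) ℂ, ∀ a : Fin (n+1) → ℤ,
    Normalized n a → a ≠ 0 →
      (omegaF n a (actSL n A g) : ℚ) ≤ (d : ℚ) / (n + 1) * (Cwt n a : ℚ)

/-- A nonzero degree-`d` form is stable if `ω(A·g,a) < (d/(n+1))·C(a)` for every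
`A ∈ SL(n+1,ℂ)` and every nontrivial normalized one-parameter subgroup `a`. -/
def FormStable (n d : ℕ) (g : MvPolynomial (Fin (n+1)) ℂ) : Prop :=
  ∀ A : Matrix.SpecialLinearGroup (Fin (n+1)) ℂ, ∀ a : Fin (n+1) → ℤ,
    Normalized n a → a ≠ 0 →
      (omegaF n a (actSL n A g) : ℚ) < (d : ℚ) / (n + 1) * (Cwt n a : ℚ)

/-- A linear system spanned by `f` is semistable if `ω(A·𝒯,a) ≤ (k·d/(n+1))·C(a)` for every
`A ∈ SL(n+1,ℂ)` and every nontrivial normalized one-parameter subgroup `a`. -/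
def TupleSemistable (n d k : ℕ) (f : Fin k → MvPolynomial (Fin (n+1)) ℂ) : Prop :=
  ∀ A : Matrix.SpecialLinearGroup (Fin (n+1)) ℂ, ∀ a : Fin (n+1) → ℤ,
    Normalized n a → a ≠ 0 →
      (omegaT n d k a (fun i => actSL n A (f i)) : ℚ) ≤
        (k : ℚ) * d / (n + 1) * (Cwt n a : ℚ)

/-- A linear system spanned by `f` is stable if `ω(A·𝒯,a) < (k·d/(n+1))·C(a)` for every
`A ∈ SL(n+1,ℂ)` and every nontrivial normalized one-parameter subgroup `a`. -/
def TupleStable (n d k : ℕ) (f : Fin k → MvPolynomial (Fin (n+1)) ℂ) : Prop :=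
  ∀ A : Matrix.SpecialLinearGroup (Fin (n+1)) ℂ, ∀ a : Fin (n+1) → ℤ,
    Normalized n a → a ≠ 0 →
      (omegaT n d k a (fun i => actSL n A (f i)) : ℚ) <
        (k : ℚ) * d / (n + 1) * (Cwt n a : ℚ)


section AuxLemmas

open Function

lemma wt_nonneg {n : ℕ} {a : Fin (n+1) → ℤ} (ha : Antitone a) (I : Fin (n+1) →₀ ℕ) :
    0 ≤ wt n a I := by
  unfold wt
  exact Finset.sum_nonneg fun j _ => mul_nonneg (Int.natCast_nonneg _)
    (sub_nonneg.mpr (ha (Fin.le_last j.castSucc)))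

lemma actSL_comp (n : ℕ) (A B : Matrix.SpecialLinearGroup (Fin (n+1)) ℂ)
    (g : MvPolynomial (Fin (n+1)) ℂ) :
    actSL n B (actSL n A g) = actSL n (A * B) g := by
  unfold actSL
  rw [MvPolynomial.comp_aeval_apply]
  have hfun : (fun i => MvPolynomial.aeval
      (fun i => ∑ j, MvPolynomial.C ((B : Matrix (Fin (n+1)) (Fin (n+1)) ℂ) i j)
        * MvPolynomial.X j)
      (∑ j, MvPolynomial.C ((A : Matrix (Fin (n+1)) (Fin (n+1)) ℂ) i j) * MvPolynomial.X j))
      = fun i => ∑ j, MvPolynomial.C (((A * B : Matrix.SpecialLinearGroup (Fin (n+1)) ℂ) :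
          Matrix (Fin (n+1)) (Fin (n+1)) ℂ) i j) * MvPolynomial.X j := by
    funext i
    simp only [map_sum, map_mul, MvPolynomial.aeval_C, MvPolynomial.aeval_X,
      Matrix.SpecialLinearGroup.coe_mul, Matrix.mul_apply, MvPolynomial.algebraMap_eq]
    simp_rw [Finset.mul_sum, ← mul_assoc, ← MvPolynomial.C_mul, Finset.sum_mul]
    rw [Finset.sum_comm]
  rw [hfun]

lemma actSL_one (n : ℕ) (g : MvPolynomial (Fin (n+1)) ℂ) : actSL n 1 g = g := by
  unfold actSL
  have h : (fun i => ∑ j, MvPolynomial.C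
      (((1 : Matrix.SpecialLinearGroup (Fin (n+1)) ℂ) :
        Matrix (Fin (n+1)) (Fin (n+1)) ℂ) i j) * MvPolynomial.X j)
      = (MvPolynomial.X : Fin (n+1) → MvPolynomial (Fin (n+1)) ℂ) := by
    funext i
    simp [Matrix.SpecialLinearGroup.coe_one, Matrix.one_apply, apply_ite MvPolynomial.C,
      ite_mul, Finset.sum_ite_eq]
  rw [h, MvPolynomial.aeval_X_left_apply]

lemma actSL_injective (n : ℕ) (A : Matrix.SpecialLinearGroup (Fin (n+1)) ℂ) :
    Function.Injective (actSL n A) := by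
  have h : Function.LeftInverse (actSL n A⁻¹) (actSL n A) := fun g => by
    rw [actSL_comp, mul_inv_cancel, actSL_one]
  exact h.injective

lemma support_subset_of_fd {σ' : Type*} (W : Submodule ℂ (MvPolynomial σ' ℂ))
    [FiniteDimensional ℂ W] :
    ∃ U : Finset (σ' →₀ ℕ), ∀ p ∈ W, p.support ⊆ U := by
  classical
  obtain ⟨s, hs⟩ := Module.Finite.iff_fg.mp ‹FiniteDimensional ℂ W›
  refine ⟨s.sup MvPolynomial.support, fun p hp => ?_⟩
  rw [← hs] at hp
  induction hp using Submodule.span_induction with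
  | mem x hx => exact Finset.le_sup (f := MvPolynomial.support) (Finset.mem_coe.mp hx)
  | zero => simp
  | add x y _ _ hx hy =>
      exact subset_trans MvPolynomial.support_add (Finset.union_subset hx hy)
  | smul c x _ hx => exact subset_trans MvPolynomial.support_smul hx

set_option synthInstance.maxHeartbeats 400000 in
set_option maxHeartbeats 1000000 in
lemma exists_adapted {σ' K : Type*} [LinearOrder K] (key : (σ' →₀ ℕ) → K)
    (hkey : Function.Injective key) :
    ∀ (m : ℕ) (W : Submodule ℂ (MvPolynomial σ' ℂ)) (_ : FiniteDimensional ℂ W)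
      (_ : Module.finrank ℂ W = m),
      ∃ (g : Fin m → MvPolynomial σ' ℂ) (I : Fin m → (σ' →₀ ℕ)),
        (∀ i, g i ∈ W) ∧ (∀ i, g i ≠ 0) ∧
        (∀ i, I i ∈ (g i).support) ∧
        (∀ i, ∀ J ∈ (g i).support, key (I i) ≤ key J) ∧
        (∀ i j, i ≠ j → MvPolynomial.coeff (I j) (g i) = 0) := by
  classical
  intro m
  induction m with
  | zero =>
    intro W _ _
    exact ⟨Fin.elim0, Fin.elim0, fun i => i.elim0, fun i => i.elim0, fun i => i.elim0,
      fun i => i.elim0, fun i => i.elim0⟩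
  | succ m ih =>
    intro W hfd hrk
    classical
    obtain ⟨U, hU⟩ := support_subset_of_fd W
    have hWbot : W ≠ ⊥ := by
      intro h
      rw [h] at hrk
      simp [finrank_bot] at hrk
    obtain ⟨q, hqW, hq0⟩ := (Submodule.ne_bot_iff W).mp hWbot
    set V : Finset (σ' →₀ ℕ) := U.filter (fun x => ∃ p, p ∈ W ∧ p ≠ 0 ∧ x ∈ p.support ∧
      ∀ J ∈ p.support, key x ≤ key J) with hV
    have hVne : V.Nonempty := by
      have hqs : q.support.Nonempty := by
        rw [Finset.nonempty_iff_ne_empty]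
        intro h
        exact hq0 (MvPolynomial.support_eq_empty.mp h)
      obtain ⟨x, hx, hxmin⟩ := q.support.exists_min_image key hqs
      exact ⟨x, Finset.mem_filter.mpr ⟨hU q hqW hx, q, hqW, hq0, hx, hxmin⟩⟩
    obtain ⟨I0, hI0V, hmax⟩ := V.exists_max_image key hVne
    obtain ⟨hI0U, p0, hp0W, hp00, hI0supp, hp0min⟩ := Finset.mem_filter.mp hI0V
    have hp0coeff : MvPolynomial.coeff I0 p0 ≠ 0 := MvPolynomial.mem_support_iff.mp hI0supp
    set φ : W →ₗ[ℂ] ℂ := (MvPolynomial.lcoeff ℂ I0).comp W.subtype with hφdef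
    have hφsurj : Function.Surjective φ := by
      intro cc
      refine ⟨(cc / MvPolynomial.coeff I0 p0) • ⟨p0, hp0W⟩, ?_⟩
      show MvPolynomial.coeff I0 (((cc / MvPolynomial.coeff I0 p0) •
        (⟨p0, hp0W⟩ : W) : W) : MvPolynomial σ' ℂ) = cc
      rw [Submodule.coe_smul]
      rw [MvPolynomial.coeff_smul, smul_eq_mul, div_mul_cancel₀ _ hp0coeff]
    have hkerrk : Module.finrank ℂ (LinearMap.ker φ) = m := by
      have h1 := LinearMap.finrank_range_add_finrank_ker φ
      rw [LinearMap.range_eq_top.mpr hφsurj, finrank_top, hrk] at h1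
      simp only [Module.finrank_self] at h1
      omega
    set W' : Submodule ℂ (MvPolynomial σ' ℂ) := W ⊓ LinearMap.ker (MvPolynomial.lcoeff ℂ I0)
      with hW'def
    have hW'le : W' ≤ W := inf_le_left
    haveI hW'fd : FiniteDimensional ℂ W' := Submodule.finiteDimensional_of_le hW'le
    have hcomap : Submodule.comap W.subtype W' = LinearMap.ker φ := by
      rw [hW'def]
      ext x
      rw [Submodule.mem_comap, Submodule.mem_inf]
      constructor
      · intro hx
        exact LinearMap.mem_ker.mpr (LinearMap.mem_ker.mp hx.2)
      · intro hx
        exact ⟨x.2, LinearMap.mem_ker.mpr (LinearMap.mem_ker.mp hx)⟩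
    have hrk' : Module.finrank ℂ W' = m := by
      have e := Submodule.comapSubtypeEquivOfLe (p := W') (q := W) hW'le
      have h2 : Module.finrank ℂ (Submodule.comap W.subtype W') = Module.finrank ℂ W' :=
        e.finrank_eq
      rw [hcomap] at h2
      rw [← h2]
      exact hkerrk
    obtain ⟨g, I, hgW', hg0, hImem, hImin, hdiag⟩ := ih W' hW'fd hrk'
    have hgW : ∀ i, g i ∈ W := fun i => hW'le (hgW' i)
    have hgker : ∀ i, MvPolynomial.coeff I0 (g i) = 0 := by
      intro i
      have h3 := (Submodule.mem_inf.mp (hgW' i)).2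
      simpa [MvPolynomial.lcoeff_apply] using h3
    have hlt : ∀ i, key (I i) < key I0 := by
      intro i
      have hiV : I i ∈ V := Finset.mem_filter.mpr ⟨hU (g i) (hgW i) (hImem i),
        g i, hgW i, hg0 i, hImem i, hImin i⟩
      refine lt_of_le_of_ne (hmax _ hiV) fun heq => ?_
      have heq2 : I i = I0 := hkey heq
      exact MvPolynomial.mem_support_iff.mp (hImem i) (by rw [heq2]; exact hgker i)
    have hp0I : ∀ j : Fin m, MvPolynomial.coeff (I j) p0 = 0 := by
      intro j
      by_contra hc
      have hmem : I j ∈ p0.support := MvPolynomial.mem_support_iff.mpr hc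
      exact absurd (hp0min _ hmem) (not_le.mpr (hlt j))
    refine ⟨Fin.snoc g p0, Fin.snoc I I0, ?_, ?_, ?_, ?_, ?_⟩
    · intro i
      induction i using Fin.lastCases with
      | last => simpa using hp0W
      | cast i => simpa using hgW i
    · intro i
      induction i using Fin.lastCases with
      | last => simpa using hp00
      | cast i => simpa using hg0 i
    · intro i
      induction i using Fin.lastCases with
      | last => simpa using hI0supp
      | cast i => simpa using hImem i
    · intro i
      induction i using Fin.lastCases with
      | last => simpa using hp0min
      | cast i => simpa using hImin i
    · intro i j
      induction i using Fin.lastCases with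
      | last =>
        induction j using Fin.lastCases with
        | last => intro hij; exact absurd rfl hij
        | cast j => intro _; simpa using hp0I j
      | cast i =>
        induction j using Fin.lastCases with
        | last => intro _; simpa using hgker i
        | cast j =>
          intro hij
          have hij' : i ≠ j := fun h => hij (by rw [h])
          simpa using hdiag i j hij'

end AuxLemmas

/-- Let `k ≥ 2` and let `𝒯` be spanned by `k` linearly independent degree-`d`
forms. If `𝒯` contains a semistable member `F` such that every member of `𝒯` not
proportional to `F` is stable, then `𝒯` is stable. -/
theorem tuple_stable_of_at_worst_one_strictly_semistable
    (n d k : ℕ) (hn : 1 ≤ n) (hd : 1 ≤ d) (hk : 2 ≤ k)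
    (f : Fin k → MvPolynomial (Fin (n+1)) ℂ)
    (hhom : ∀ i, (f i).IsHomogeneous d)
    (hind : LinearIndependent ℂ f)
    (F : MvPolynomial (Fin (n+1)) ℂ) (hF0 : F ≠ 0)
    (hFmem : F ∈ Submodule.span ℂ (Set.range f))
    (hFss : FormSemistable n d F)
    (hothers : ∀ g : MvPolynomial (Fin (n+1)) ℂ, g ≠ 0 →
      g ∈ Submodule.span ℂ (Set.range f) → (¬ ∃ c : ℂ, g = c • F) → FormStable n d g) :
    TupleStable n d k f := by
  intro A a hnorm ha0
  classical
  set Φ : Fin (n+1) → MvPolynomial (Fin (n+1)) ℂ :=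
    fun i => ∑ j, MvPolynomial.C ((A : Matrix (Fin (n+1)) (Fin (n+1)) ℂ) i j)
      * MvPolynomial.X j with hΦ
  set LA : MvPolynomial (Fin (n+1)) ℂ →ₗ[ℂ] MvPolynomial (Fin (n+1)) ℂ :=
    (MvPolynomial.aeval Φ).toLinearMap with hLAdef
  have hLAapp : ∀ g, LA g = actSL n A g := fun g => rfl
  have hinj : Function.Injective (actSL n A) := actSL_injective n A
  have hLAinj : Function.Injective LA := hinj
  set h' : Fin k → MvPolynomial (Fin (n+1)) ℂ := fun i => actSL n A (f i) with hh'
  have hind' : LinearIndependent ℂ h' := by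
    have h1 := hind.map' LA (LinearMap.ker_eq_bot.mpr hLAinj)
    exact h1
  have hΦhom : ∀ i, (Φ i).IsHomogeneous 1 := by
    intro i
    exact MvPolynomial.IsHomogeneous.sum _ _ _ fun j _ =>
      (MvPolynomial.isHomogeneous_X _ _).C_mul _
  have hhom' : ∀ i, (h' i).IsHomogeneous d := by
    intro i
    have h1 := (hhom i).aeval Φ hΦhom
    rw [one_mul] at h1
    exact h1
  set W : Submodule ℂ (MvPolynomial (Fin (n+1)) ℂ) := Submodule.span ℂ (Set.range h') with hW
  haveI hWfd : FiniteDimensional ℂ W := FiniteDimensional.span_of_finite ℂ (Set.finite_range h')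
  have hrkW : Module.finrank ℂ W = k := by
    rw [hW, finrank_span_eq_card hind', Fintype.card_fin]
  obtain ⟨enc, henc⟩ := Countable.exists_injective_nat (Fin (n+1) →₀ ℕ)
  set key : (Fin (n+1) →₀ ℕ) → Lex (ℤ × ℕ) := fun I => toLex (wt n a I, enc I) with hkeydef
  have hkeyinj : Function.Injective key := by
    intro x y hxy
    have h1 := congrArg ofLex hxy
    exact henc (congrArg Prod.snd h1)
  have hkeywt : ∀ x y, key x ≤ key y → wt n a x ≤ wt n a y := by
    intro x y hxy
    rcases Prod.Lex.le_iff.mp hxy with h | h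
    · exact le_of_lt h
    · exact le_of_eq h.1
  obtain ⟨g, I, hgW, hg0, hImem, hImin, hdiag⟩ := exists_adapted key hkeyinj k W hWfd hrkW
  have hIinj : Function.Injective I := by
    intro i j hij
    by_contra hne
    have h1 := hdiag i j hne
    rw [← hij] at h1
    exact MvPolynomial.mem_support_iff.mp (hImem i) h1
  have hghom : ∀ i, (g i).IsHomogeneous d := by
    intro i
    have hle : W ≤ MvPolynomial.homogeneousSubmodule (Fin (n+1)) ℂ d := by
      rw [hW, Submodule.span_le]
      rintro _ ⟨j, rfl⟩
      exact (MvPolynomial.mem_homogeneousSubmodule _ _).mpr (hhom' j)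
    exact (MvPolynomial.mem_homogeneousSubmodule _ _).mp (hle (hgW i))
  have hdeg : ∀ i, (∑ j, I i j) = d := by
    intro i
    have h1 := hghom i (MvPolynomial.mem_support_iff.mp (hImem i))
    rw [Finsupp.weight_apply, Finsupp.sum_fintype] at h1
    · simpa using h1
    · intro _
      simp
  set S : Finset (Fin (n+1) →₀ ℕ) := Finset.image I Finset.univ with hS
  have hScard : S.card = k := by
    rw [hS, Finset.card_image_of_injective _ hIinj, Finset.card_univ, Fintype.card_fin]
  have hPl : InPlucker n d k h' S := by
    refine ⟨fun J hJ => ?_, hScard, ?_⟩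
    · obtain ⟨i, _, rfl⟩ := Finset.mem_image.mp hJ
      exact hdeg i
    · set e : Fin k → (Fin (n+1) →₀ ℕ) :=
        fun j => ((S.equivFin.symm (Fin.cast hScard.symm j)) : (Fin (n+1) →₀ ℕ)) with he
      have heS : ∀ j, e j ∈ S := fun j => (S.equivFin.symm (Fin.cast hScard.symm j)).2
      have heinj : Function.Injective e := by
        intro x y hxy
        have h1 := S.equivFin.symm.injective (Subtype.ext hxy)
        have h2 := congrArg Fin.val h1
        simp only [Fin.coe_cast] at h2
        exact Fin.val_injective h2
      have hex : ∀ j, ∃ i, I i = e j := by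
        intro j
        obtain ⟨i, _, hi⟩ := Finset.mem_image.mp (heS j)
        exact ⟨i, hi⟩
      choose π hπ using hex
      have hπinj : Function.Injective π := by
        intro x y hxy
        apply heinj
        rw [← hπ x, ← hπ y, hxy]
      set πe : Equiv.Perm (Fin k) := Equiv.ofBijective π (Finite.injective_iff_bijective.mp hπinj)
        with hπe
      have hcex : ∀ i, ∃ c : Fin k → ℂ, ∑ l, c l • h' l = g i := by
        intro i
        have h1 := hgW i
        rw [hW] at h1
        exact (Submodule.mem_span_range_iff_exists_fun ℂ).mp h1
      choose c hc using hcex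
      set M' : Matrix (Fin k) (Fin k) ℂ := Matrix.of fun i j => MvPolynomial.coeff (I j) (h' i)
        with hM'
      have hNeq : (Matrix.of fun i j : Fin k => MvPolynomial.coeff (I j) (g i))
          = Matrix.of (fun i l : Fin k => c i l) * M' := by
        ext i j
        rw [Matrix.mul_apply]
        rw [Matrix.of_apply, ← hc i, MvPolynomial.coeff_sum]
        simp [hM', MvPolynomial.coeff_smul, smul_eq_mul]
      have hNdiag : (Matrix.of fun i j : Fin k => MvPolynomial.coeff (I j) (g i))
          = Matrix.diagonal fun i => MvPolynomial.coeff (I i) (g i) := by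
        ext i j
        by_cases hij : i = j
        · subst hij
          simp
        · rw [Matrix.diagonal_apply_ne _ hij]
          simpa using hdiag i j hij
      have hdetdiag : Matrix.det (Matrix.of fun i j : Fin k =>
          MvPolynomial.coeff (I j) (g i)) ≠ 0 := by
        rw [hNdiag, Matrix.det_diagonal]
        exact Finset.prod_ne_zero_iff.mpr fun i _ =>
          MvPolynomial.mem_support_iff.mp (hImem i)
      have hdetM' : M'.det ≠ 0 := by
        intro h0
        rw [hNeq, Matrix.det_mul, h0, mul_zero] at hdetdiag
        exact hdetdiag rfl
      have htarget : (Matrix.of fun i j : Fin k =>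
          MvPolynomial.coeff ((S.equivFin.symm (Fin.cast hScard.symm j)) : (Fin (n+1) →₀ ℕ))
            (h' i)) = M'.submatrix id πe := by
        ext i j
        show MvPolynomial.coeff (e j) (h' i) = MvPolynomial.coeff (I (π j)) (h' i)
        rw [hπ j]
      rw [htarget, Matrix.det_permute' πe M']
      refine mul_ne_zero ?_ hdetM'
      rcases Int.units_eq_one_or (Equiv.Perm.sign πe) with hs | hs <;> simp [hs]
  have hwt0 : ∀ J : Fin (n+1) →₀ ℕ, 0 ≤ wt n a J := fun J => wt_nonneg hnorm.1 J
  have hbdd : BddBelow {x : ℤ | ∃ S' : Finset (Fin (n+1) →₀ ℕ),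
      InPlucker n d k h' S' ∧ x = ∑ J ∈ S', wt n a J} := by
    refine ⟨0, fun x hx => ?_⟩
    obtain ⟨S', _, rfl⟩ := hx
    exact Finset.sum_nonneg fun J _ => hwt0 J
  have homega : omegaT n d k a h' ≤ ∑ J ∈ S, wt n a J := by
    unfold omegaT
    exact csInf_le hbdd ⟨S, hPl, rfl⟩
  have hsumim : ∑ J ∈ S, wt n a J = ∑ i, wt n a (I i) := by
    rw [hS]
    exact Finset.sum_image fun x _ y _ hxy => hIinj hxy
  have homegaF : ∀ i, omegaF n a (g i) = wt n a (I i) := by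
    intro i
    unfold omegaF
    apply IsLeast.csInf_eq
    constructor
    · exact ⟨I i, hImem i, rfl⟩
    · rintro x ⟨J, hJ, rfl⟩
      exact hkeywt _ _ (hImin i J hJ)
  have hmap : W = Submodule.map LA (Submodule.span ℂ (Set.range f)) := by
    rw [hW, Submodule.map_span, ← Set.range_comp]
    rfl
  have hu : ∀ i, ∃ v, v ∈ Submodule.span ℂ (Set.range f) ∧ actSL n A v = g i := by
    intro i
    have hgi := hgW i
    rw [hmap] at hgi
    obtain ⟨v, hv1, hv2⟩ := Submodule.mem_map.mp hgi
    exact ⟨v, hv1, hv2⟩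
  choose u huspan hug using hu
  have hu0 : ∀ i, u i ≠ 0 := by
    intro i h
    apply hg0 i
    rw [← hug i, h]
    show MvPolynomial.aeval Φ (0 : MvPolynomial (Fin (n+1)) ℂ) = 0
    simp
  have hbound : ∀ i, (omegaF n a (g i) : ℚ) ≤ (d : ℚ) / (n + 1) * (Cwt n a : ℚ) := by
    intro i
    by_cases hP : ∃ cc : ℂ, u i = cc • F
    · obtain ⟨cc, hcc⟩ := hP
      have hcc0 : cc ≠ 0 := by
        intro h
        exact hu0 i (by rw [hcc, h, zero_smul])
      have hgi : g i = cc • actSL n A F := by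
        rw [← hug i, hcc]
        show MvPolynomial.aeval Φ (cc • F) = cc • MvPolynomial.aeval Φ F
        rw [map_smul]
      have hsupp : (g i).support = (actSL n A F).support := by
        rw [hgi]
        exact MvPolynomial.support_smul_eq hcc0 _
      have heq : omegaF n a (g i) = omegaF n a (actSL n A F) := by
        unfold omegaF
        rw [hsupp]
      rw [heq]
      exact hFss A a hnorm ha0
    · have h1 := hothers (u i) (hu0 i) (huspan i) hP A a hnorm ha0
      rw [hug i] at h1
      exact le_of_lt h1
  have huniq : ∀ i j, (∃ cc : ℂ, u i = cc • F) → (∃ cc : ℂ, u j = cc • F) → i = j := by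
    rintro i j ⟨ci, hci⟩ ⟨cj, hcj⟩
    by_contra hne
    have hci0 : ci ≠ 0 := fun h => hu0 i (by rw [hci, h, zero_smul])
    have hcj0 : cj ≠ 0 := fun h => hu0 j (by rw [hcj, h, zero_smul])
    have hrel : g i = (ci / cj) • g j := by
      rw [← hug i, ← hug j, hci, hcj]
      show MvPolynomial.aeval Φ (ci • F)
        = (ci / cj) • MvPolynomial.aeval Φ (cj • F)
      rw [map_smul, map_smul, smul_smul, div_mul_cancel₀ _ hcj0]
    have h0 : MvPolynomial.coeff (I i) (g i) = 0 := by
      rw [hrel, MvPolynomial.coeff_smul, hdiag j i (Ne.symm hne), smul_zero]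
    exact MvPolynomial.mem_support_iff.mp (hImem i) h0
  have hstrict : ∃ i, (omegaF n a (g i) : ℚ) < (d : ℚ) / (n + 1) * (Cwt n a : ℚ) := by
    by_cases hP : ∃ i0, ∃ cc : ℂ, u i0 = cc • F
    · obtain ⟨i0, hi0⟩ := hP
      obtain ⟨i1, hi1⟩ := Fintype.exists_ne_of_one_lt_card
        (by rw [Fintype.card_fin]; omega) i0
      have hnP : ¬ ∃ cc : ℂ, u i1 = cc • F := fun h => hi1 (huniq i1 i0 h hi0)
      have h1 := hothers (u i1) (hu0 i1) (huspan i1) hnP A a hnorm ha0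
      rw [hug i1] at h1
      exact ⟨i1, h1⟩
    · have h0k : 0 < k := by omega
      refine ⟨⟨0, h0k⟩, ?_⟩
      have hnP : ¬ ∃ cc : ℂ, u ⟨0, h0k⟩ = cc • F := fun h => hP ⟨_, h⟩
      have h1 := hothers _ (hu0 _) (huspan _) hnP A a hnorm ha0
      rw [hug _] at h1
      exact h1
  have hsumlt : ∑ i : Fin k, (omegaF n a (g i) : ℚ) <
      ∑ _i : Fin k, (d : ℚ) / (n + 1) * (Cwt n a : ℚ) := by
    obtain ⟨i1, hi1⟩ := hstrict
    exact Finset.sum_lt_sum (fun i _ => hbound i) ⟨i1, Finset.mem_univ _, hi1⟩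
  have hconst : ∑ _i : Fin k, (d : ℚ) / (n + 1) * (Cwt n a : ℚ)
      = (k : ℚ) * d / (n + 1) * (Cwt n a : ℚ) := by
    rw [Finset.sum_const, Finset.card_univ, Fintype.card_fin, nsmul_eq_mul]
    ring
  have h1 : (omegaT n d k a h' : ℚ) ≤ ((∑ J ∈ S, wt n a J : ℤ) : ℚ) := by
    exact_mod_cast homega
  have h2 : ((∑ J ∈ S, wt n a J : ℤ) : ℚ) = ∑ i : Fin k, (omegaF n a (g i) : ℚ) := by
    rw [hsumim]
    push_cast
    refine Finset.sum_congr rfl fun i _ => ?_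
    norm_cast
    exact (homegaF i).symm
  rw [h2] at h1
  exact lt_of_le_of_lt h1 (lt_of_lt_of_le hsumlt (le_of_eq hconst))
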